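/- arXiv:2009.01552 — 7 statements merged into one kernel-verified Lean document; each statement's English description precedes it below -/
import Mathlib

section
/- Let A1 be anti-stable (all eigenvalues λ satisfy |λ| ≥ 1) and A2 stable (all eigenvalues in the open unit disk). If T solves T·A1 − A2·T = A3, then for every solution of the discrete-time system x1(t+1) = A1·x1(t), x2(t+1) = A2·x2(t) + A3·x1(t), the difference x2(t) − T·x1(t) tends to 0 as t → ∞. -/
/-!
By the Sylvester equation, the error `e t = x2 t - T x1 t` obeys `e (t + 1) = A2 e t`, so
`e t = A2 ^ t e 0`. Stability of `A2` means its spectral radius is `< 1`, and Gelfand's formula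
then gives `‖A2 ^ t‖ ≤ r ^ t` eventually for some `r < 1`, so `A2 ^ t → 0`.
-/

open Matrix Filter Topology

def IsStable {n : Type*} [Fintype n] [DecidableEq n] (M : Matrix n n ℝ) : Prop :=
  ∀ μ ∈ spectrum ℂ (M.map (algebraMap ℝ ℂ)), ‖μ‖ < 1

def IsAntiStable {n : Type*} [Fintype n] [DecidableEq n] (M : Matrix n n ℝ) : Prop :=
  ∀ μ ∈ spectrum ℂ (M.map (algebraMap ℝ ℂ)), 1 ≤ ‖μ‖

theorem spectralRadius_lt_one_of_forall_norm_lt_one {𝕜 A : Type*} [NormedField 𝕜]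
    [ProperSpace 𝕜] [NormedRing A] [NormedAlgebra 𝕜 A] [CompleteSpace A] {a : A}
    (h : ∀ k ∈ spectrum 𝕜 a, ‖k‖ < 1) : spectralRadius 𝕜 a < 1 := by
  rcases (spectrum 𝕜 a).eq_empty_or_nonempty with he | hne
  · simp [spectralRadius, he]
  · simpa using spectrum.spectralRadius_lt_of_forall_lt_of_nonempty hne (r := 1)
      (by simpa [← NNReal.coe_lt_coe] using h)

theorem tendsto_pow_atTop_nhds_zero_of_spectralRadius_lt_one {A : Type*} [NormedRing A]
    [NormedAlgebra ℂ A] [CompleteSpace A] {a : A} (h : spectralRadius ℂ a < 1) :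
    Tendsto (fun n => a ^ n) atTop (𝓝 0) := by
  obtain ⟨r, hr0, hρr, hr_lt⟩ := ENNReal.lt_iff_exists_real_btwn.1 h
  have hr1 : r < 1 := by simpa using ENNReal.ofReal_lt_one.1 hr_lt
  have hroot : ∀ᶠ n : ℕ in atTop, ‖a ^ n‖ ^ (1 / n : ℝ) < r := by
    have hgelfand := spectrum.pow_norm_pow_one_div_tendsto_nhds_spectralRadius a
    filter_upwards [hgelfand.eventually_lt_const hρr] with n hn
    exact (ENNReal.ofReal_lt_ofReal_iff'.1 hn).1
  have hgeom : ∀ᶠ n : ℕ in atTop, ‖a ^ n‖ ≤ r ^ n := by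
    filter_upwards [hroot, eventually_ne_atTop 0] with n hn hn0
    calc ‖a ^ n‖ = (‖a ^ n‖ ^ (1 / n : ℝ)) ^ n := by
          rw [one_div, Real.rpow_inv_natCast_pow (norm_nonneg _) hn0]
      _ ≤ r ^ n := pow_le_pow_left₀ (by positivity) hn.le n
  exact squeeze_zero_norm' hgeom (tendsto_pow_atTop_nhds_zero_of_lt_one hr0 hr1)

section

-- Any Banach algebra norm on matrices will do; this one induces the usual (product) topology.
attribute [local instance] Matrix.linftyOpNormedRing Matrix.linftyOpNormedAlgebra

theorem Matrix.tendsto_pow_atTop_nhds_zero_of_forall_spectrum_norm_lt_one {n : Type*} [Fintype n]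
    [DecidableEq n] {B : Matrix n n ℂ} (h : ∀ μ ∈ spectrum ℂ B, ‖μ‖ < 1) :
    Tendsto (fun t => B ^ t) atTop (𝓝 0) :=
  tendsto_pow_atTop_nhds_zero_of_spectralRadius_lt_one
    (spectralRadius_lt_one_of_forall_norm_lt_one h)

end

theorem IsStable.tendsto_pow_atTop_nhds_zero {n : Type*} [Fintype n] [DecidableEq n]
    {A : Matrix n n ℝ} (hA : IsStable A) : Tendsto (fun t => A ^ t) atTop (𝓝 0) := by
  have hC := Matrix.tendsto_pow_atTop_nhds_zero_of_forall_spectrum_norm_lt_one hA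
  have hre : Continuous fun M : Matrix n n ℂ => M.map Complex.re :=
    continuous_id.matrix_map Complex.continuous_re
  -- `A ^ t` is the entrywise real part of the power of the complexification.
  convert (hre.tendsto 0).comp hC using 1
  · ext t : 1
    rw [Function.comp_apply, ← RingHom.mapMatrix_apply, ← map_pow, RingHom.mapMatrix_apply,
      Matrix.map_map]
    ext i j; simp
  · simp

theorem Matrix.pow_mulVec_of_forall_succ {n R : Type*} [Fintype n] [DecidableEq n] [Semiring R]
    {A : Matrix n n R} {x : ℕ → n → R} (hx : ∀ t, x (t + 1) = A *ᵥ x t) (t : ℕ) :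
    x t = (A ^ t) *ᵥ x 0 := by
  induction t with
  | zero => simp
  | succ t ih => rw [hx t, ih, mulVec_mulVec, pow_succ']

theorem Matrix.tendsto_of_forall_succ_eq_mulVec {n R : Type*} [Fintype n] [DecidableEq n]
    [Semiring R] [TopologicalSpace R] [IsTopologicalSemiring R] {A : Matrix n n R}
    (hA : Tendsto (fun t => A ^ t) atTop (𝓝 0)) {x : ℕ → n → R}
    (hx : ∀ t, x (t + 1) = A *ᵥ x t) : Tendsto x atTop (𝓝 0) := by
  have hcont : Continuous fun M : Matrix n n R => M *ᵥ x 0 :=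
    continuous_id.matrix_mulVec continuous_const
  have hlim := (hcont.tendsto 0).comp hA
  rw [zero_mulVec] at hlim
  convert hlim using 1
  exact funext (pow_mulVec_of_forall_succ hx)

theorem Matrix.sub_mulVec_succ_of_sylvester {m n R : Type*} [Fintype m] [Fintype n] [Ring R]
    {A1 : Matrix m m R} {A2 : Matrix n n R} {A3 T : Matrix n m R} (hT : T * A1 - A2 * T = A3)
    {x1 : ℕ → m → R} {x2 : ℕ → n → R} (hx1 : ∀ t, x1 (t + 1) = A1 *ᵥ x1 t)
    (hx2 : ∀ t, x2 (t + 1) = A2 *ᵥ x2 t + A3 *ᵥ x1 t) (t : ℕ) :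
    x2 (t + 1) - T *ᵥ x1 (t + 1) = A2 *ᵥ (x2 t - T *ᵥ x1 t) := by
  rw [hx2, hx1, ← hT, mulVec_mulVec, sub_mulVec, mulVec_sub, mulVec_mulVec]
  abel

theorem stmt1_general {n1 n2 : ℕ}
    (A1 : Matrix (Fin n1) (Fin n1) ℝ) (A2 : Matrix (Fin n2) (Fin n2) ℝ)
    (A3 : Matrix (Fin n2) (Fin n1) ℝ) (T : Matrix (Fin n2) (Fin n1) ℝ)
    (hA2 : IsStable A2)
    (hT : T * A1 - A2 * T = A3)
    (x1 : ℕ → Fin n1 → ℝ) (x2 : ℕ → Fin n2 → ℝ)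
    (hx1 : ∀ t, x1 (t + 1) = A1.mulVec (x1 t))
    (hx2 : ∀ t, x2 (t + 1) = A2.mulVec (x2 t) + A3.mulVec (x1 t)) :
    Tendsto (fun t => x2 t - T.mulVec (x1 t)) atTop (nhds 0) :=
  Matrix.tendsto_of_forall_succ_eq_mulVec hA2.tendsto_pow_atTop_nhds_zero
    (Matrix.sub_mulVec_succ_of_sylvester hT hx1 hx2)

theorem stmt1 {n1 n2 : ℕ}
    (A1 : Matrix (Fin n1) (Fin n1) ℝ) (A2 : Matrix (Fin n2) (Fin n2) ℝ)
    (A3 : Matrix (Fin n2) (Fin n1) ℝ) (T : Matrix (Fin n2) (Fin n1) ℝ)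
    (hA1 : IsAntiStable A1) (hA2 : IsStable A2)
    (hT : T * A1 - A2 * T = A3)
    (x1 : ℕ → Fin n1 → ℝ) (x2 : ℕ → Fin n2 → ℝ)
    (hx1 : ∀ t, x1 (t + 1) = A1.mulVec (x1 t))
    (hx2 : ∀ t, x2 (t + 1) = A2.mulVec (x2 t) + A3.mulVec (x1 t)) :
    Tendsto (fun t => x2 t - T.mulVec (x1 t)) atTop (nhds 0) :=
  stmt1_general A1 A2 A3 T hA2 hT x1 x2 hx1 hx2
end

section
/- Let A1 be anti-stable and A2 stable. If the output z(t) = D1·x1(t) + D2·x2(t) of the system x1(t+1) = A1·x1(t), x2(t+1) = A2·x2(t) + A3·x1(t) converges to 0 for all initial states x1(0), x2(0), then there exists a (unique) matrix T with T·A1 − A2·T = A3 and D1 + D2·T = 0. -/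
open Matrix Filter

/-!
The spectra of `A1` (outside the open unit disc) and `A2` (inside it) are disjoint, so the
Sylvester operator `T ↦ T * A1 - A2 * T` is injective, hence bijective; let `T` solve
`T * A1 - A2 * T = A3`. Then `x2 = T x1` is a trajectory, along which the output is
`(D1 + D2 T) A1^t x1(0)`. On a generalized eigenvector of `A1` for `μ`, induction on its height
shows that the output is `μ^t` times its initial value, and `1 ≤ |μ|` forces that value to vanish.
Generalized eigenvectors span, so `D1 + D2 T = 0`.
-/

open Polynomial Topology

namespace Matrix

def sylvesterMap {m n R : Type*} [Fintype m] [Fintype n] [CommRing R] (A : Matrix n n R)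
    (B : Matrix m m R) : Matrix m n R →ₗ[R] Matrix m n R where
  toFun T := T * A - B * T
  map_add' S T := by simp only [Matrix.add_mul, Matrix.mul_add]; abel
  map_smul' c T := by simp only [Matrix.smul_mul, Matrix.mul_smul, smul_sub, RingHom.id_apply]

section Sylvester

variable {m n : Type*} [Fintype m] [DecidableEq m] [Fintype n] [DecidableEq n]

theorem eq_zero_of_mul_eq_mul_of_disjoint_spectrum {K : Type*} [Field K] [IsAlgClosed K]
    {A : Matrix n n K} {B : Matrix m m K} (hAB : Disjoint (spectrum K A) (spectrum K B))
    {T : Matrix m n K} (hT : T * A = B * T) : T = 0 := by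
  cases isEmpty_or_nonempty m
  · exact Subsingleton.elim _ _
  have hpow (k : ℕ) : T * A ^ k = B ^ k * T := by
    induction k with
    | zero => simp
    | succ k ih =>
      rw [pow_succ, pow_succ, ← Matrix.mul_assoc, ih, Matrix.mul_assoc, hT, Matrix.mul_assoc]
  have hpoly (q : K[X]) : T * aeval A q = aeval B q * T := by
    simp only [aeval_eq_sum_range, Matrix.mul_sum, Matrix.sum_mul, Matrix.mul_smul,
      Matrix.smul_mul, hpow]
  -- spectral mapping: `σ (χ_B(A)) = χ_B(σ A)`, and `χ_B` vanishes exactly on `σ B`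
  have hunit : IsUnit (aeval A B.charpoly) := by
    rw [← spectrum.zero_notMem_iff K, spectrum.map_polynomial_aeval_of_degree_pos _ _
      (by simp [charpoly_degree_eq_dim, Fintype.card_pos])]
    rintro ⟨μ, hμA, hμB⟩
    exact hAB.notMem_of_mem_left hμA (mem_spectrum_iff_isRoot_charpoly.mpr hμB)
  have hkill : T * aeval A B.charpoly = 0 := by
    rw [hpoly, aeval_self_charpoly, Matrix.zero_mul]
  rw [← mul_nonsing_inv_cancel_right _ T ((isUnit_iff_isUnit_det _).mp hunit), hkill,
    Matrix.zero_mul]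

theorem eq_zero_of_mul_eq_mul_of_isAntiStable_of_isStable {A : Matrix n n ℝ}
    {B : Matrix m m ℝ} (hA : IsAntiStable A) (hB : IsStable B) {T : Matrix m n ℝ}
    (hT : T * A = B * T) : T = 0 := by
  have hdisj : Disjoint (spectrum ℂ (A.map (algebraMap ℝ ℂ)))
      (spectrum ℂ (B.map (algebraMap ℝ ℂ))) :=
    Set.disjoint_left.mpr fun μ hμA hμB => (hB μ hμB).not_ge (hA μ hμA)
  have hTc := eq_zero_of_mul_eq_mul_of_disjoint_spectrum hdisj (T := T.map (algebraMap ℝ ℂ))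
    (by rw [← Matrix.map_mul, ← Matrix.map_mul, hT])
  exact map_injective (algebraMap ℝ ℂ).injective (hTc.trans (Matrix.map_zero _ (map_zero _)).symm)

theorem sylvesterMap_bijective_of_isAntiStable_of_isStable {A : Matrix n n ℝ}
    {B : Matrix m m ℝ} (hA : IsAntiStable A) (hB : IsStable B) :
    Function.Bijective (sylvesterMap A B) := by
  have hinj : Function.Injective (sylvesterMap A B) := (injective_iff_map_eq_zero _).mpr
    fun T hT => eq_zero_of_mul_eq_mul_of_isAntiStable_of_isStable hA hB (sub_eq_zero.mp hT)
  exact ⟨hinj, LinearMap.injective_iff_surjective.mp hinj⟩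

end Sylvester

theorem tendsto_of_forall_tendsto_mulVec {ι m n R : Type*} [Fintype n] [DecidableEq n]
    [Semiring R] [TopologicalSpace R] {l : Filter ι} {F : ι → Matrix m n R} {M : Matrix m n R}
    (h : ∀ v, Tendsto (fun i => F i *ᵥ v) l (𝓝 (M *ᵥ v))) : Tendsto F l (𝓝 M) := by
  refine tendsto_pi_nhds.mpr fun i => tendsto_pi_nhds.mpr fun j => ?_
  simpa [mulVec_single_one] using tendsto_pi_nhds.mp (h (Pi.single j 1)) i

end Matrix

theorem eq_zero_of_tendsto_of_succ_eq_smul {𝕜 E : Type*} [NormedField 𝕜] [NormedAddCommGroup E]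
    [NormedSpace 𝕜 E] {u : ℕ → E} {μ : 𝕜} (hμ : 1 ≤ ‖μ‖) (hu : ∀ t, u (t + 1) = μ • u t)
    (hlim : Tendsto u atTop (𝓝 0)) : u = 0 := by
  have hmono : Monotone (‖u ·‖) := monotone_nat_of_le_succ fun t => by
    rw [hu, norm_smul]
    exact le_mul_of_one_le_left (norm_nonneg _) hμ
  have h0 : u 0 = 0 := norm_le_zero_iff.mp <|
    ge_of_tendsto' (by simpa using hlim.norm) fun t => hmono (Nat.zero_le t)
  funext t
  induction t with
  | zero => exact h0
  | succ t ih => simp [hu, ih]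

namespace Module.End

variable {𝕜 V W : Type*} [NormedField 𝕜] [AddCommGroup V] [Module 𝕜 V]
  [NormedAddCommGroup W] [NormedSpace 𝕜 W]

def unobservableSubspace (f : End 𝕜 V) (g : V →ₗ[𝕜] W) : Submodule 𝕜 V :=
  ⨅ t : ℕ, LinearMap.ker (g ∘ₗ f ^ t)

theorem mem_unobservableSubspace {f : End 𝕜 V} {g : V →ₗ[𝕜] W} {v : V} :
    v ∈ unobservableSubspace f g ↔ ∀ t, g ((f ^ t) v) = 0 := by
  simp [unobservableSubspace]

theorem ker_pow_sub_smul_le_unobservableSubspace {f : End 𝕜 V} {g : V →ₗ[𝕜] W} {μ : 𝕜}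
    (hμ : 1 ≤ ‖μ‖) (hg : ∀ v, Tendsto (fun t => g ((f ^ t) v)) atTop (𝓝 0)) (k : ℕ) :
    LinearMap.ker ((f - μ • 1) ^ k) ≤ unobservableSubspace f g := by
  induction k with
  | zero => rw [pow_zero, one_eq_id, LinearMap.ker_id]; exact bot_le
  | succ k ih =>
    intro v hv
    have hw : (f - μ • 1) v ∈ unobservableSubspace f g :=
      ih (by rwa [LinearMap.mem_ker, ← Module.End.mul_apply, ← pow_succ])
    have hrec (t : ℕ) : g ((f ^ (t + 1)) v) = μ • g ((f ^ t) v) := by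
      have := mem_unobservableSubspace.mp hw t
      rwa [LinearMap.sub_apply, LinearMap.smul_apply, one_apply, map_sub, map_smul, map_sub,
        map_smul, ← Module.End.mul_apply, ← pow_succ, sub_eq_zero] at this
    exact mem_unobservableSubspace.mpr <| congrFun <|
      eq_zero_of_tendsto_of_succ_eq_smul hμ hrec (hg v)

theorem eq_zero_of_tendsto_comp_pow [IsAlgClosed 𝕜] [FiniteDimensional 𝕜 V] {f : End 𝕜 V}
    {g : V →ₗ[𝕜] W} (hf : ∀ μ, f.HasEigenvalue μ → 1 ≤ ‖μ‖)
    (hg : ∀ v, Tendsto (fun t => g ((f ^ t) v)) atTop (𝓝 0)) : g = 0 := by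
  have htop : ⊤ ≤ unobservableSubspace f g := by
    rw [← iSup_maxGenEigenspace_eq_top f]
    refine iSup_le fun μ v hv => ?_
    obtain ⟨k, hk⟩ := (mem_maxGenEigenspace f μ v).mp hv
    rcases eq_or_ne v 0 with rfl | hv0
    · exact zero_mem _
    have hμ : f.HasEigenvalue μ := hasEigenvalue_of_hasGenEigenvalue (k := k)
      ((Submodule.ne_bot_iff _).mpr ⟨v, mem_genEigenspace_nat.mpr hk, hv0⟩)
    exact ker_pow_sub_smul_le_unobservableSubspace (hf μ hμ) hg k hk
  ext v
  simpa using mem_unobservableSubspace.mp (htop Submodule.mem_top) 0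

end Module.End

namespace Matrix

variable {m n : Type*} [Fintype m] [Fintype n] [DecidableEq n]

theorem eq_zero_of_tendsto_mul_pow {𝕜 : Type*} [NormedField 𝕜] [IsAlgClosed 𝕜]
    {A : Matrix n n 𝕜} {M : Matrix m n 𝕜} (hA : ∀ μ ∈ spectrum 𝕜 A, 1 ≤ ‖μ‖)
    (hM : Tendsto (fun t => M * A ^ t) atTop (𝓝 0)) : M = 0 := by
  refine toLin'.map_eq_zero_iff.mp <| Module.End.eq_zero_of_tendsto_comp_pow
    (f := toLinAlgEquiv' A)
    (fun μ hμ => hA μ (AlgEquiv.spectrum_eq toLinAlgEquiv' A ▸ hμ.mem_spectrum)) fun v => ?_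
  have hcont := ((continuous_id.matrix_mulVec (continuous_const (y := v))).tendsto' 0 0
    (by simp)).comp hM
  simpa [Function.comp_def, ← map_pow, mulVec_mulVec] using hcont

theorem eq_zero_of_tendsto_mul_pow_of_isAntiStable {A : Matrix n n ℝ} {M : Matrix m n ℝ}
    (hA : IsAntiStable A) (hM : Tendsto (fun t => M * A ^ t) atTop (𝓝 0)) : M = 0 := by
  refine map_injective (algebraMap ℝ ℂ).injective <|
    (eq_zero_of_tendsto_mul_pow hA ?_).trans (Matrix.map_zero _ (map_zero _)).symm
  have hmap (t : ℕ) : (M * A ^ t).map (algebraMap ℝ ℂ) =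
      M.map (algebraMap ℝ ℂ) * A.map (algebraMap ℝ ℂ) ^ t := by
    rw [Matrix.map_mul, ← RingHom.mapMatrix_apply, map_pow]
    rfl
  have hcont := ((continuous_id.matrix_map (continuous_algebraMap ℝ ℂ)).tendsto' 0 0
    (by simp)).comp hM
  simpa only [Function.comp_def, id, hmap] using hcont

end Matrix

theorem stmt3 {n1 n2 p : ℕ}
    (A1 : Matrix (Fin n1) (Fin n1) ℝ) (A2 : Matrix (Fin n2) (Fin n2) ℝ)
    (A3 : Matrix (Fin n2) (Fin n1) ℝ)
    (D1 : Matrix (Fin p) (Fin n1) ℝ) (D2 : Matrix (Fin p) (Fin n2) ℝ)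
    (hA1 : IsAntiStable A1) (hA2 : IsStable A2)
    (hreg : ∀ x1 : ℕ → Fin n1 → ℝ, ∀ x2 : ℕ → Fin n2 → ℝ,
      (∀ t, x1 (t + 1) = A1.mulVec (x1 t)) →
      (∀ t, x2 (t + 1) = A2.mulVec (x2 t) + A3.mulVec (x1 t)) →
      Tendsto (fun t => D1.mulVec (x1 t) + D2.mulVec (x2 t)) atTop (nhds 0)) :
    ∃! T : Matrix (Fin n2) (Fin n1) ℝ, T * A1 - A2 * T = A3 ∧ D1 + D2 * T = 0 := by
  obtain ⟨T, hT, hT_unique⟩ :=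
    (sylvesterMap_bijective_of_isAntiStable_of_isStable hA1 hA2).existsUnique A3
  have hTA : T * A1 = A2 * T + A3 := sub_eq_iff_eq_add'.mp hT
  have hobs : D1 + D2 * T = 0 := by
    refine eq_zero_of_tendsto_mul_pow_of_isAntiStable hA1
      (tendsto_of_forall_tendsto_mulVec fun x0 => ?_)
    have hz := hreg (fun t => (A1 ^ t) *ᵥ x0) (fun t => T *ᵥ ((A1 ^ t) *ᵥ x0))
      (fun t => by rw [pow_succ', ← mulVec_mulVec])
      (fun t => by rw [pow_succ', ← mulVec_mulVec, mulVec_mulVec (M := T), hTA, add_mulVec,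
        ← mulVec_mulVec])
    simpa [mulVec_mulVec, Matrix.add_mul, Matrix.mul_assoc, add_mulVec] using hz
  exact ⟨T, ⟨hT, hobs⟩, fun T' hT' => hT_unique T' hT'.1⟩
end

section
/- Let Z, X ∈ ℝ^{n×τ}, U ∈ ℝ^{m×τ}, and Σ = {(A,B) : Z = A·X + B·U}. Suppose Σ is nonempty and there exists K ∈ ℝ^{m×n} such that A + B·K is the same matrix for all (A,B) ∈ Σ (in particular if A + B·K is stable for all (A,B) ∈ Σ). If X has full row rank, then there exists a right inverse X† of X such that K = U·X† and A + B·K = Z·X† for all (A,B) ∈ Σ. -/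
open Matrix

/-! Perturbing a consistent pair `(A₀, B₀)` by any `(M, N)` with `M X + N U = 0` keeps it
consistent, so the constancy of `A + B K` forces `M + N K = 0`. Hence every left annihilator of
the stacked data matrix `[X; U]` also annihilates `[1; K]`, and by duality `[1; K] = [X; U] Xd`
for some `Xd`. Then `X Xd = 1`, `U Xd = K` and `A + B K = (A X + B U) Xd = Z Xd`. -/

theorem LinearMap.exists_comp_eq_of_ker_le {K V W W' : Type*} [Field K]
    [AddCommGroup V] [Module K V] [AddCommGroup W] [Module K W] [AddCommGroup W'] [Module K W']
    {f : V →ₗ[K] W} {g : V →ₗ[K] W'} (hfg : ker f ≤ ker g) :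
    ∃ h : W →ₗ[K] W', h ∘ₗ f = g := by
  obtain ⟨l, hl⟩ := ((ker f).liftQ f le_rfl).exists_leftInverse_of_injective
    ((ker f).ker_liftQ_eq_bot f le_rfl le_rfl)
  refine ⟨(ker f).liftQ g hfg ∘ₗ l, LinearMap.ext fun x => ?_⟩
  have hlf : l (f x) = (ker f).mkQ x := LinearMap.congr_fun hl ((ker f).mkQ x)
  simp [hlf]

theorem Matrix.exists_mul_eq_of_forall_vecMul_eq_zero {K r s t : Type*} [Field K]
    [Fintype r] [Fintype t] {F : Matrix r t K} {G : Matrix r s K}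
    (h : ∀ v, v ᵥ* F = 0 → v ᵥ* G = 0) : ∃ Y : Matrix t s K, F * Y = G := by
  classical
  obtain ⟨Y, hY⟩ := LinearMap.exists_comp_eq_of_ker_le
    (f := F.toLinearMapRight') (g := G.toLinearMapRight') h
  refine ⟨Y.toMatrixRight', ?_⟩
  simpa using congrArg LinearMap.toMatrixRight' hY

theorem Matrix.exists_mul_eq_of_forall_mul_eq_zero {K r s t : Type*} [Field K]
    [Fintype r] [Fintype t] {F : Matrix r t K} {G : Matrix r s K}
    (h : ∀ M : Matrix s r K, M * F = 0 → M * G = 0) : ∃ Y : Matrix t s K, F * Y = G := by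
  rcases isEmpty_or_nonempty s with _ | ⟨⟨j⟩⟩
  · exact ⟨0, by ext _ j; exact isEmptyElim j⟩
  refine exists_mul_eq_of_forall_vecMul_eq_zero fun v hv => ?_
  have hvG := h (replicateRow s v) (by rw [← replicateRow_vecMul, hv, replicateRow_zero])
  rw [← replicateRow_vecMul] at hvG
  exact congrFun hvG j

theorem add_mul_eq_zero_of_mul_add_mul_eq_zero {R n m τ : Type*} [Ring R] [Fintype n] [Fintype m]
    {Z X : Matrix n τ R} {U : Matrix m τ R} {K : Matrix m n R} {C A₀ M : Matrix n n R}
    {B₀ N : Matrix n m R} (h₀ : Z = A₀ * X + B₀ * U)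
    (hconst : ∀ (A : Matrix n n R) (B : Matrix n m R), Z = A * X + B * U → A + B * K = C)
    (hMN : M * X + N * U = 0) :
    M + N * K = 0 := by
  have hshift : Z = (A₀ + M) * X + (B₀ + N) * U := by
    rw [Matrix.add_mul, Matrix.add_mul, add_add_add_comm, hMN, add_zero, h₀]
  calc M + N * K = (A₀ + M + (B₀ + N) * K) - (A₀ + B₀ * K) := by rw [Matrix.add_mul]; abel
    _ = 0 := by rw [hconst _ _ hshift, hconst _ _ h₀, sub_self]

theorem stmt5_general {n m τ : ℕ}
    (Z X : Matrix (Fin n) (Fin τ) ℝ) (U : Matrix (Fin m) (Fin τ) ℝ)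
    (hne : ∃ A : Matrix (Fin n) (Fin n) ℝ, ∃ B : Matrix (Fin n) (Fin m) ℝ,
      Z = A * X + B * U)
    (K : Matrix (Fin m) (Fin n) ℝ)
    (C : Matrix (Fin n) (Fin n) ℝ)
    (hconst : ∀ A : Matrix (Fin n) (Fin n) ℝ, ∀ B : Matrix (Fin n) (Fin m) ℝ,
      Z = A * X + B * U → A + B * K = C) :
    ∃ Xd : Matrix (Fin τ) (Fin n) ℝ, X * Xd = 1 ∧ K = U * Xd ∧
      ∀ A : Matrix (Fin n) (Fin n) ℝ, ∀ B : Matrix (Fin n) (Fin m) ℝ,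
        Z = A * X + B * U → A + B * K = Z * Xd := by
  obtain ⟨A₀, B₀, h₀⟩ := hne
  obtain ⟨Xd, hXd⟩ := exists_mul_eq_of_forall_mul_eq_zero
    (F := fromRows X U) (G := fromRows 1 K) fun M hM => by
      rw [← fromCols_toCols M, fromCols_mul_fromRows] at hM ⊢
      rw [Matrix.mul_one]
      exact add_mul_eq_zero_of_mul_add_mul_eq_zero h₀ hconst hM
  rw [fromRows_mul] at hXd
  obtain ⟨hXXd, hUXd⟩ := fromRows_inj hXd
  refine ⟨Xd, hXXd, hUXd.symm, fun A B hAB => ?_⟩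
  rw [hAB, Matrix.add_mul, Matrix.mul_assoc, Matrix.mul_assoc, hXXd, hUXd, Matrix.mul_one]

theorem stmt5 {n m τ : ℕ}
    (Z X : Matrix (Fin n) (Fin τ) ℝ) (U : Matrix (Fin m) (Fin τ) ℝ)
    (hne : ∃ A : Matrix (Fin n) (Fin n) ℝ, ∃ B : Matrix (Fin n) (Fin m) ℝ,
      Z = A * X + B * U)
    (K : Matrix (Fin m) (Fin n) ℝ)
    (C : Matrix (Fin n) (Fin n) ℝ)
    (hconst : ∀ A : Matrix (Fin n) (Fin n) ℝ, ∀ B : Matrix (Fin n) (Fin m) ℝ,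
      Z = A * X + B * U → A + B * K = C)
    (hrank : X.rank = n) :
    ∃ Xd : Matrix (Fin τ) (Fin n) ℝ, X * Xd = 1 ∧ K = U * Xd ∧
      ∀ A : Matrix (Fin n) (Fin n) ℝ, ∀ B : Matrix (Fin n) (Fin m) ℝ,
        Z = A * X + B * U → A + B * K = Z * Xd :=
  stmt5_general Z X U hne K C hconst
end

section
/- Let Z, X ∈ ℝ^{n×τ}, U ∈ ℝ^{m×τ}, with Σ = {(A,B) : Z = A·X + B·U} nonempty. If there exists K such that A + B·K is stable for all (A,B) ∈ Σ, then X has full row rank. -/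
/-!
If `v ≠ 0` lies in the left kernel of `X`, then `(A + t • v vᵀ, B)` stays in `Σ` for every real `t`,
while the trace of `A + t • v vᵀ + B K` can be made as large as we like. A stable `n × n` matrix
has trace of absolute value at most `n` (the trace is the sum of the `n` complex eigenvalues), so
no gain `K` stabilises all of `Σ`.
-/

open Matrix

namespace Matrix

theorem exists_vecMul_eq_zero_of_rank_ne_card {m n K : Type*} [Field K] [Fintype m] [Fintype n]
    {X : Matrix m n K} (h : X.rank ≠ Fintype.card m) : ∃ v ≠ 0, v ᵥ* X = 0 := by
  have hdep : ¬Function.Injective (vecMulLinear X) := by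
    rw [coe_vecMulLinear, vecMul_injective_iff]
    exact fun hli => h hli.rank_matrix
  rw [injective_iff_map_eq_zero] at hdep
  push Not at hdep
  obtain ⟨v, hvX, hv⟩ := hdep
  exact ⟨v, hv, hvX⟩

end Matrix

theorem IsStable.abs_trace_le {n : Type*} [Fintype n] [DecidableEq n] {M : Matrix n n ℝ}
    (hM : IsStable M) : |M.trace| ≤ Fintype.card n := by
  set Mc := M.map (algebraMap ℝ ℂ)
  have htrace : (M.trace : ℂ) = Mc.trace :=
    AddMonoidHom.map_trace (algebraMap ℝ ℂ).toAddMonoidHom M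
  calc |M.trace| = ‖Mc.charpoly.roots.sum‖ := by
        rw [← trace_eq_sum_roots_charpoly, ← htrace, Complex.norm_real, Real.norm_eq_abs]
    _ ≤ (Mc.charpoly.roots.map norm).sum := norm_multiset_sum_le _
    _ ≤ Multiset.card (Mc.charpoly.roots.map norm) • (1 : ℝ) := by
        refine Multiset.sum_le_card_nsmul _ _ fun x hx => ?_
        obtain ⟨μ, hμ, rfl⟩ := Multiset.mem_map.mp hx
        exact (hM μ (mem_spectrum_of_isRoot_charpoly (Polynomial.isRoot_of_mem_roots hμ))).le
    _ ≤ Fintype.card n := by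
        rw [Multiset.card_map, nsmul_one, Nat.cast_le, ← Mc.charpoly_natDegree_eq_dim]
        exact Polynomial.card_roots' _

theorem exists_not_isStable_add_smul_vecMulVec {n : Type*} [Fintype n] [DecidableEq n]
    (M : Matrix n n ℝ) {v : n → ℝ} (hv : v ≠ 0) :
    ∃ t : ℝ, ¬IsStable (M + t • vecMulVec v v) := by
  have hvv : v ⬝ᵥ v ≠ 0 := fun h => hv (dotProduct_self_eq_zero.mp h)
  refine ⟨(Fintype.card n + 1 - M.trace) / (v ⬝ᵥ v), fun hstab => ?_⟩
  have htrace : (M + ((Fintype.card n + 1 - M.trace) / (v ⬝ᵥ v)) • vecMulVec v v).trace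
      = Fintype.card n + 1 := by
    rw [trace_add, trace_smul, trace_vecMulVec, smul_eq_mul, div_mul_cancel₀ _ hvv]
    ring
  have := hstab.abs_trace_le
  rw [htrace, abs_of_pos (by positivity)] at this
  linarith

theorem stmt6 {n m τ : ℕ}
    (Z X : Matrix (Fin n) (Fin τ) ℝ) (U : Matrix (Fin m) (Fin τ) ℝ)
    (hne : ∃ A : Matrix (Fin n) (Fin n) ℝ, ∃ B : Matrix (Fin n) (Fin m) ℝ,
      Z = A * X + B * U)
    (hstab : ∃ K : Matrix (Fin m) (Fin n) ℝ,
      ∀ A : Matrix (Fin n) (Fin n) ℝ, ∀ B : Matrix (Fin n) (Fin m) ℝ,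
        Z = A * X + B * U → IsStable (A + B * K)) :
    X.rank = n := by
  by_contra hrank
  obtain ⟨v, hv, hvX⟩ := exists_vecMul_eq_zero_of_rank_ne_card (X := X) (by simpa using hrank)
  obtain ⟨K, hK⟩ := hstab
  obtain ⟨A, B, hZ⟩ := hne
  obtain ⟨t, hunstable⟩ := exists_not_isStable_add_smul_vecMulVec (A + B * K) hv
  have hZ' : Z = (A + t • vecMulVec v v) * X + B * U := by
    have hvvX : vecMulVec v v * X = 0 := by
      rw [vecMulVec_mul, hvX]
      ext
      simp [vecMulVec_apply]
    rw [Matrix.add_mul, Matrix.smul_mul, hvvX, smul_zero, add_zero, hZ]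
  refine hunstable ?_
  rw [add_right_comm]
  exact hK _ B hZ'
end

section
/- Suppose X2− has full row rank with right inverse X2−† such that M := (X2+ − A3·X1−)·X2−† is stable, and suppose W solves the data-driven regulator equations X2−·W·A1 − (X2+ − A3·X1−)·W = A3 and D1 + (D2·X2− + E·U−)·W = 0. Then T := X2−·W and V := U−·W satisfy the classical regulator equations T·A1 − A2·T − B2·V = A3 and D1 + D2·T + E·V = 0 for every (A2,B2) with X2+ = A2·X2− + A3·X1− + B2·U−. -/
open Matrix

theorem stmt8 {n1 n2 m p τ : ℕ}
    (Um : Matrix (Fin m) (Fin τ) ℝ) (X1m : Matrix (Fin n1) (Fin τ) ℝ)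
    (X2m X2p : Matrix (Fin n2) (Fin τ) ℝ)
    (A1 : Matrix (Fin n1) (Fin n1) ℝ) (A3 : Matrix (Fin n2) (Fin n1) ℝ)
    (D1 : Matrix (Fin p) (Fin n1) ℝ) (D2 : Matrix (Fin p) (Fin n2) ℝ)
    (E : Matrix (Fin p) (Fin m) ℝ)
    (hrank : X2m.rank = n2)
    (Xd : Matrix (Fin τ) (Fin n2) ℝ) (hXd : X2m * Xd = 1)
    (hstab : IsStable ((X2p - A3 * X1m) * Xd))
    (W : Matrix (Fin τ) (Fin n1) ℝ)
    (hW1 : X2m * W * A1 - (X2p - A3 * X1m) * W = A3)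
    (hW2 : D1 + (D2 * X2m + E * Um) * W = 0) :
    ∀ A2 : Matrix (Fin n2) (Fin n2) ℝ, ∀ B2 : Matrix (Fin n2) (Fin m) ℝ,
      X2p = A2 * X2m + A3 * X1m + B2 * Um →
        (X2m * W) * A1 - A2 * (X2m * W) - B2 * (Um * W) = A3 ∧
        D1 + D2 * (X2m * W) + E * (Um * W) = 0 := by
  intro A2 B2 hd
  subst hd
  constructor
  · rw [← hW1]; simp only [Matrix.add_mul, Matrix.sub_mul, Matrix.mul_assoc]; abel
  · rw [← hW2]; simp only [Matrix.add_mul, Matrix.mul_assoc]; abel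
end

section
/- Let X2− ∈ ℝ^{n×τ} and F ∈ ℝ^{n×τ}. Suppose there exists Θ ∈ ℝ^{τ×n} such that X2−·Θ is symmetric and the block matrix [[X2−·Θ, F·Θ],[Θᵀ·Fᵀ, X2−·Θ]] is positive definite. Then X2− has full row rank, X2−† := Θ·(X2−·Θ)⁻¹ is a right inverse of X2−, and F·X2−† is stable (spectral radius < 1). -/
/-! With `P = X2m Θ` and `M = F Θ P⁻¹` we have `M P = F Θ`, so the Schur complement of the
lower-right block `P` in the positive definite block matrix is `P - M P Mᵀ`: `P` is a Lyapunov
certificate for `M`. For a complex left eigenvector `v` of `M` with eigenvalue `μ`,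
`v (P - M P Mᵀ) v* = (1 - ‖μ‖²) v P v*`, and both quadratic forms are positive, so `‖μ‖ < 1`.
Full row rank comes from the right inverse `Θ P⁻¹` of `X2m`. -/

open Matrix

open scoped ComplexOrder

namespace Matrix

variable {m n 𝕜 : Type*} [RCLike 𝕜]

theorem conjTranspose_map_ofReal (A : Matrix m n ℝ) :
    (A.map (algebraMap ℝ 𝕜))ᴴ = Aᵀ.map (algebraMap ℝ 𝕜) := by
  rw [← conjTranspose_eq_transpose_of_trivial,
    conjTranspose_map _ fun a => (RCLike.conj_ofReal a).symm]

variable [Fintype m] [Fintype n]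

theorem rank_eq_card_height_of_mul_eq_one {k R : Type*} [Fintype k] [DecidableEq m]
    [CommRing R] [StrongRankCondition R] {A : Matrix m k R} {B : Matrix k m R} (h : A * B = 1) :
    A.rank = Fintype.card m :=
  le_antisymm A.rank_le_card_height <| by
    simpa [h, rank_one] using rank_mul_le_left A B

theorem PosDef.schur_complement₂₂ {R : Type*} [CommRing R] [PartialOrder R] [StarRing R]
    [DecidableEq n] {A : Matrix m m R} {B : Matrix m n R} {D : Matrix n n R} [Invertible D]
    (hD : D.IsHermitian) (h : (fromBlocks A B Bᴴ D).PosDef) : (A - B * D⁻¹ * Bᴴ).PosDef := by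
  refine posDef_iff_dotProduct_mulVec.mpr
    ⟨(IsHermitian.fromBlocks₂₂ A B hD).mp h.isHermitian, fun x hx => ?_⟩
  have hxy : (x ⊕ᵥ -((D⁻¹ * Bᴴ) *ᵥ x)) ≠ 0 := fun h0 => hx (funext fun i => congrFun h0 (.inl i))
  have := h.dotProduct_mulVec_pos hxy
  rwa [dotProduct_mulVec, schur_complement_eq₂₂ A B _ _ hD, add_neg_cancel, dotProduct_zero,
    zero_add, ← dotProduct_mulVec] at this

variable [DecidableEq n]

theorem exists_vecMul_eq_smul_of_mem_spectrum {K : Type*} [Field K] {M : Matrix n n K} {μ : K}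
    (hμ : μ ∈ spectrum K M) : ∃ v ≠ 0, v ᵥ* M = μ • v := by
  rw [spectrum.mem_iff, isUnit_iff_isUnit_det, isUnit_iff_ne_zero, not_not,
    ← exists_vecMul_eq_zero_iff] at hμ
  obtain ⟨v, hv, hvM⟩ := hμ
  refine ⟨v, hv, ?_⟩
  rw [Algebra.algebraMap_eq_smul_one, vecMul_sub, vecMul_smul, vecMul_one, sub_eq_zero] at hvM
  exact hvM.symm

theorem PosDef.map_ofReal {A : Matrix n n ℝ} (hA : A.PosDef) :
    (A.map (algebraMap ℝ 𝕜)).PosDef := by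
  obtain ⟨B, rfl⟩ : ∃ B : Matrix n n ℝ, A = star B * B := by
    open MatrixOrder in exact CStarAlgebra.nonneg_iff_eq_star_mul_self.mp hA.posSemidef.nonneg
  have hB : IsUnit B := by
    have hdet := (isUnit_iff_isUnit_det _).mp hA.isUnit
    rw [det_mul] at hdet
    exact (isUnit_iff_isUnit_det B).mpr (isUnit_of_mul_isUnit_right hdet)
  rw [Matrix.map_mul, star_eq_conjTranspose, conjTranspose_eq_transpose_of_trivial,
    ← conjTranspose_map_ofReal]
  exact PosDef.conjTranspose_mul_self _
    (mulVec_injective_of_isUnit (hB.map (algebraMap ℝ 𝕜).mapMatrix))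

theorem norm_lt_one_of_mem_spectrum_of_lyapunov {M P : Matrix n n 𝕜} (hP : P.PosDef)
    (hL : (P - M * P * Mᴴ).PosDef) {μ : 𝕜} (hμ : μ ∈ spectrum 𝕜 M) : ‖μ‖ < 1 := by
  obtain ⟨v, hv, hvM⟩ := exists_vecMul_eq_smul_of_mem_spectrum hμ
  have hv' : star v ≠ 0 := star_ne_zero.mpr hv
  set q := star (star v) ⬝ᵥ (P *ᵥ star v)
  have hMPM : star (star v) ⬝ᵥ ((M * P * Mᴴ) *ᵥ star v) = (‖μ‖ ^ 2 : ℝ) * q := by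
    rw [star_star, ← mulVec_mulVec, dotProduct_mulVec, ← vecMul_vecMul, hvM, ← star_vecMul,
      hvM, star_smul, smul_vecMul, smul_dotProduct, dotProduct_smul, smul_eq_mul, smul_eq_mul,
      ← mul_assoc, RCLike.ofReal_pow, ← RCLike.mul_conj]
    simp only [q, star_star, dotProduct_mulVec, RCLike.star_def]
  have hpos := hL.dotProduct_mulVec_pos hv'
  rw [sub_mulVec, dotProduct_sub, hMPM, ← one_sub_mul] at hpos
  have hq : 0 < q := hP.dotProduct_mulVec_pos hv'
  rw [← RCLike.ofReal_one, ← RCLike.ofReal_sub, RCLike.pos_iff, RCLike.re_ofReal_mul] at hpos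
  have h1 : ‖μ‖ ^ 2 < 1 := sub_pos.mp (pos_of_mul_pos_left hpos.1 (RCLike.pos_iff.mp hq).1.le)
  exact (sq_lt_one_iff₀ (norm_nonneg μ)).mp h1

end Matrix

theorem isStable_of_lyapunov {n : Type*} [Fintype n] [DecidableEq n] {M P : Matrix n n ℝ}
    (hP : P.PosDef) (hL : (P - M * P * Mᵀ).PosDef) : IsStable M := by
  refine fun μ hμ => norm_lt_one_of_mem_spectrum_of_lyapunov hP.map_ofReal ?_ hμ
  have := hL.map_ofReal (𝕜 := ℂ)
  simp only [← RingHom.mapMatrix_apply, map_sub, map_mul] at this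
  rwa [RingHom.mapMatrix_apply, RingHom.mapMatrix_apply, RingHom.mapMatrix_apply,
    ← conjTranspose_map_ofReal] at this

theorem stmt11 {n τ : ℕ}
    (X2m F : Matrix (Fin n) (Fin τ) ℝ)
    (Θ : Matrix (Fin τ) (Fin n) ℝ)
    (hsym : (X2m * Θ)ᵀ = X2m * Θ)
    (hpd : (Matrix.fromBlocks (X2m * Θ) (F * Θ) (Θᵀ * Fᵀ) (X2m * Θ)).PosDef) :
    X2m.rank = n ∧ X2m * (Θ * (X2m * Θ)⁻¹) = 1 ∧
      IsStable (F * (Θ * (X2m * Θ)⁻¹)) := by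
  set P := X2m * Θ
  have hP : P.PosDef := hpd.submatrix Sum.inr_injective
  have : Invertible P := hP.isUnit.invertible
  have hright : X2m * (Θ * P⁻¹) = 1 := by rw [← Matrix.mul_assoc, mul_inv_of_invertible]
  refine ⟨?_, hright, ?_⟩
  · rw [rank_eq_card_height_of_mul_eq_one hright, Fintype.card_fin]
  have hLyap : P - F * Θ * P⁻¹ * (F * Θ)ᴴ = P - F * (Θ * P⁻¹) * P * (F * (Θ * P⁻¹))ᵀ := by
    rw [transpose_mul, transpose_mul, transpose_nonsing_inv, hsym,
      conjTranspose_eq_transpose_of_trivial, transpose_mul]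
    simp only [Matrix.mul_assoc, inv_mul_cancel_left_of_invertible]
  have hpd' : (fromBlocks P (F * Θ) (F * Θ)ᴴ P).PosDef := by
    rwa [conjTranspose_eq_transpose_of_trivial, transpose_mul]
  exact isStable_of_lyapunov hP (hLyap ▸ hpd'.schur_complement₂₂ hP.isHermitian)
end

section
/- Let M ∈ ℝ^{n×n} be stable (spectral radius < 1) and let A1 = Q⁻¹·Λ·Q with Λ = diag(λ1,…,λp) where each |λi| ≥ 1 (over ℂ). Then for any R ∈ ℂ^{n×p}, the unique solution T of T·A1 − M·T = R is given by T = Σᵢ (λᵢ·I − M)⁻¹ · R · q̂ᵢ · qᵢ, where q̂ᵢ are the columns of Q⁻¹ and qᵢ the rows of Q. -/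
open Matrix

theorem stmt13 {n p : ℕ}
    (M : Matrix (Fin n) (Fin n) ℝ) (hM : IsStable M)
    (A1 Q Qinv : Matrix (Fin p) (Fin p) ℂ)
    (hQ : Q * Qinv = 1) (hQ' : Qinv * Q = 1)
    (lam : Fin p → ℂ) (hlam : ∀ i, 1 ≤ ‖lam i‖)
    (hA1 : A1 = Qinv * Matrix.diagonal lam * Q)
    (R : Matrix (Fin n) (Fin p) ℂ) :
    (∑ i : Fin p,
        (lam i • (1 : Matrix (Fin n) (Fin n) ℂ) - M.map (algebraMap ℝ ℂ))⁻¹ * R *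
          Matrix.of (fun a b => Qinv a i * Q i b)) * A1 -
      M.map (algebraMap ℝ ℂ) *
        (∑ i : Fin p,
          (lam i • (1 : Matrix (Fin n) (Fin n) ℂ) - M.map (algebraMap ℝ ℂ))⁻¹ * R *
            Matrix.of (fun a b => Qinv a i * Q i b)) = R ∧
    ∀ T : Matrix (Fin n) (Fin p) ℂ,
      T * A1 - M.map (algebraMap ℝ ℂ) * T = R →
        T = ∑ i : Fin p,
          (lam i • (1 : Matrix (Fin n) (Fin n) ℂ) - M.map (algebraMap ℝ ℂ))⁻¹ * R *
            Matrix.of (fun a b => Qinv a i * Q i b) := by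
  set Mc := M.map (algebraMap ℝ ℂ) with hMc
  have hunit : ∀ i : Fin p, IsUnit (lam i • (1 : Matrix (Fin n) (Fin n) ℂ) - Mc) := by
    intro i
    have hnot : lam i ∉ spectrum ℂ Mc := fun h => absurd (hM _ h) (not_lt.2 (hlam i))
    rw [spectrum.mem_iff, not_not] at hnot
    rwa [Algebra.algebraMap_eq_smul_one] at hnot
  have hdet : ∀ i, IsUnit (lam i • (1 : Matrix (Fin n) (Fin n) ℂ) - Mc).det :=
    fun i => (Matrix.isUnit_iff_isUnit_det _).1 (hunit i)
  set S : Fin p → Matrix (Fin n) (Fin n) ℂ :=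
    fun i => (lam i • (1 : Matrix (Fin n) (Fin n) ℂ) - Mc)⁻¹ with hS
  set E : Fin p → Matrix (Fin p) (Fin p) ℂ :=
    fun i => Matrix.of (fun a b => Qinv a i * Q i b) with hE
  have hQA : Q * A1 = Matrix.diagonal lam * Q := by
    rw [hA1, ← Matrix.mul_assoc, ← Matrix.mul_assoc, hQ, Matrix.one_mul]
  have hEA : ∀ i, E i * A1 = lam i • E i := by
    intro i
    ext a b
    have h : (Q * A1) i b = lam i * Q i b := by rw [hQA, Matrix.diagonal_mul]
    simp only [hE, Matrix.mul_apply, Matrix.of_apply, Matrix.smul_apply, smul_eq_mul]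
    calc ∑ c, Qinv a i * Q i c * A1 c b = Qinv a i * ∑ c, Q i c * A1 c b := by
          rw [Finset.mul_sum]; simp [mul_assoc]
      _ = Qinv a i * (lam i * Q i b) := by rw [← Matrix.mul_apply, h]
      _ = lam i * (Qinv a i * Q i b) := by ring
  have hEsum : ∑ i, E i = (1 : Matrix (Fin p) (Fin p) ℂ) := by
    ext a b
    rw [← hQ']
    simp [hE, Matrix.sum_apply, Matrix.mul_apply]
  have hsolve : (∑ i, S i * R * E i) * A1 - Mc * ∑ i, S i * R * E i = R := by
    rw [Matrix.sum_mul, Matrix.mul_sum, ← Finset.sum_sub_distrib]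
    have hterm : ∀ i ∈ Finset.univ, S i * R * E i * A1 - Mc * (S i * R * E i) = R * E i := by
      intro i _
      have key : (lam i • (1 : Matrix (Fin n) (Fin n) ℂ) - Mc) * S i = 1 :=
        Matrix.mul_nonsing_inv _ (hdet i)
      have hrw : R * E i = ((lam i • (1 : Matrix (Fin n) (Fin n) ℂ) - Mc) * S i) * (R * E i) := by
        rw [key, Matrix.one_mul]
      rw [Matrix.mul_assoc (S i * R), hEA i, Matrix.mul_smul, hrw]
      simp [Matrix.sub_mul, Matrix.smul_mul, Matrix.mul_assoc]
    rw [Finset.sum_congr rfl hterm, ← Matrix.mul_sum, hEsum, Matrix.mul_one]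
  refine ⟨hsolve, ?_⟩
  intro T hT
  have hdiff : (T - ∑ i, S i * R * E i) * A1 = Mc * (T - ∑ i, S i * R * E i) := by
    have h1 : T * A1 - Mc * T = (∑ i, S i * R * E i) * A1 - Mc * (∑ i, S i * R * E i) := by
      rw [hT, hsolve]
    rw [Matrix.sub_mul, Matrix.mul_sub]
    exact sub_eq_sub_iff_sub_eq_sub.mp h1
  set D := T - ∑ i, S i * R * E i with hD
  have h2 : D * Qinv * Matrix.diagonal lam * Q = Mc * D := by
    rw [← hdiff, hA1]
    simp [Matrix.mul_assoc]
  have hU : D * Qinv * Matrix.diagonal lam = Mc * (D * Qinv) := by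
    have h3 := congrArg (fun X => X * Qinv) h2
    simpa [Matrix.mul_assoc, hQ] using h3
  have hU0 : D * Qinv = 0 := by
    ext a j
    have hinj := Matrix.mulVec_injective_iff_isUnit.2 (hunit j)
    have hv : (lam j • (1 : Matrix (Fin n) (Fin n) ℂ) - Mc) *ᵥ (fun c => (D * Qinv) c j) =
        (lam j • (1 : Matrix (Fin n) (Fin n) ℂ) - Mc) *ᵥ 0 := by
      rw [Matrix.mulVec_zero]
      funext a'
      have h3 : (D * Qinv * Matrix.diagonal lam) a' j = (Mc * (D * Qinv)) a' j := by rw [hU]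
      simp only [Matrix.mulVec, dotProduct, Matrix.sub_apply, Matrix.smul_apply,
        Matrix.one_apply, smul_eq_mul, sub_mul, Finset.sum_sub_distrib, Pi.zero_apply,
        mul_ite, mul_one, mul_zero, ite_mul, zero_mul, Finset.sum_ite_eq, Finset.mem_univ,
        if_true]
      rw [sub_eq_zero, ← Matrix.mul_apply, ← h3, Matrix.mul_diagonal]
      ring
    have := congrFun (hinj hv) a
    simpa using this
  have hD0 : D = 0 := by
    have h4 : D * Qinv * Q = D := by rw [Matrix.mul_assoc, hQ', Matrix.mul_one]
    rw [← h4, hU0, Matrix.zero_mul]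
  exact sub_eq_zero.mp hD0
end
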